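/- arXiv:1008.3943 — 2 statements merged into one kernel-verified Lean document; each statement's English description precedes it below -/
import Mathlib

section
/- If w is a locally integrable nonnegative function on ℝ and M denotes the dyadic maximal operator, then for every t > 0 and every integrable f, t · w({x : Mf(x) > t}) ≤ ∫ |f(x)| · Mw(x) dx, where w(E) = ∫_E w. -/
/-!
Calderón–Zygmund stopping time. Since `|I|⁻¹ ∫_I |f| ≤ ‖f‖₁ / |I| → 0` as `|I| → ∞` and two
dyadic intervals are either nested or disjoint, the set `{Mf > t}` is covered by the pairwise
disjoint family of maximal dyadic intervals `I` with `t < |I|⁻¹ ∫_I |f|`. On each of them the two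
averages can be exchanged:
`t · w(I) ≤ (|I|⁻¹ ∫_I |f|) · w(I) = ∫_I |f| · (|I|⁻¹ w(I)) ≤ ∫_I |f| · Mw`,
and summing over the family gives the inequality.
-/

open MeasureTheory Set ENNReal

/-- The dyadic interval `[2^k m, 2^k (m+1))`. -/
noncomputable def dyadicI (k m : ℤ) : Set ℝ := Set.Ico ((2:ℝ)^k * m) ((2:ℝ)^k * (m+1))

/-- The dyadic maximal function of an `ℝ≥0∞`-valued function. -/
noncomputable def dyadicMaximal (w : ℝ → ℝ≥0∞) (x : ℝ) : ℝ≥0∞ :=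
  ⨆ (k : ℤ) (m : ℤ) (_ : x ∈ dyadicI k m),
    (∫⁻ y in dyadicI k m, w y) / volume (dyadicI k m)

lemma mem_dyadicI_iff {k m : ℤ} {x : ℝ} : x ∈ dyadicI k m ↔ ⌊x / 2 ^ k⌋ = m := by
  have hpos : (0 : ℝ) < 2 ^ k := zpow_pos two_pos k
  rw [Int.floor_eq_iff, le_div_iff₀ hpos, div_lt_iff₀ hpos, dyadicI, mem_Ico]
  constructor <;> rintro ⟨h₁, h₂⟩ <;> constructor <;> linarith

lemma volume_dyadicI (k m : ℤ) : volume (dyadicI k m) = ENNReal.ofReal (2 ^ k) := by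
  rw [dyadicI, Real.volume_Ico]
  congr 1
  ring

lemma floor_div_two_zpow_congr {k k' : ℤ} (hk : k ≤ k') {x y : ℝ}
    (h : ⌊x / 2 ^ k⌋ = ⌊y / 2 ^ k⌋) : ⌊x / 2 ^ k'⌋ = ⌊y / 2 ^ k'⌋ := by
  obtain ⟨n, rfl⟩ := Int.exists_add_of_le hk
  have hsplit (z : ℝ) : z / 2 ^ (k + n) = z / 2 ^ k / ((2 ^ n : ℕ) : ℝ) := by
    rw [zpow_add₀ two_ne_zero, div_div, zpow_natCast, Nat.cast_pow, Nat.cast_ofNat]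
  rw [hsplit, hsplit, Int.floor_div_natCast, Int.floor_div_natCast, h]

lemma dyadicI_subset_of_mem {k k' m m' : ℤ} {x : ℝ} (hk : k ≤ k')
    (hx : x ∈ dyadicI k m) (hx' : x ∈ dyadicI k' m') : dyadicI k m ⊆ dyadicI k' m' := by
  intro y hy
  rw [mem_dyadicI_iff] at hx hx' hy ⊢
  rw [← hx', floor_div_two_zpow_congr hk (hy.trans hx.symm)]

noncomputable def dyadicAvg (u : ℝ → ℝ≥0∞) (k m : ℤ) : ℝ≥0∞ :=
  (∫⁻ y in dyadicI k m, u y) / volume (dyadicI k m)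

lemma dyadicAvg_le_dyadicMaximal {u : ℝ → ℝ≥0∞} {k m : ℤ} {x : ℝ} (hx : x ∈ dyadicI k m) :
    dyadicAvg u k m ≤ dyadicMaximal u x :=
  le_iSup₂_of_le k m <| le_iSup_of_le hx le_rfl

lemma exists_lt_dyadicAvg_of_lt_dyadicMaximal {u : ℝ → ℝ≥0∞} {T : ℝ≥0∞} {x : ℝ}
    (hx : T < dyadicMaximal u x) : ∃ k, T < dyadicAvg u k ⌊x / 2 ^ k⌋ := by
  simp only [dyadicMaximal, lt_iSup_iff] at hx
  obtain ⟨k, m, hxm, hT⟩ := hx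
  exact ⟨k, mem_dyadicI_iff.mp hxm ▸ hT⟩

lemma dyadicAvg_le_lintegral_div (u : ℝ → ℝ≥0∞) (k m : ℤ) :
    dyadicAvg u k m ≤ (∫⁻ y, u y) / ENNReal.ofReal (2 ^ k) := by
  rw [dyadicAvg, volume_dyadicI]
  gcongr
  exact Measure.restrict_le_self

lemma bddAbove_levels_lt_dyadicAvg {u : ℝ → ℝ≥0∞} (hu : ∫⁻ y, u y ≠ ⊤) {T : ℝ≥0∞} (hT : T ≠ 0)
    (x : ℝ) : BddAbove {k : ℤ | T < dyadicAvg u k ⌊x / 2 ^ k⌋} := by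
  set C := (∫⁻ y, u y) / T
  have hC : C ≠ ⊤ := (ENNReal.div_lt_top hu hT).ne
  obtain ⟨n, hn⟩ := pow_unbounded_of_one_lt C.toReal (one_lt_two : (1 : ℝ) < 2)
  refine ⟨n, fun k hk => ?_⟩
  have hpos : (0 : ℝ) < 2 ^ k := zpow_pos two_pos k
  have hkC : ENNReal.ofReal (2 ^ k) < C := by
    have := hk.trans_le (dyadicAvg_le_lintegral_div u k _)
    have hne : ENNReal.ofReal (2 ^ k) ≠ 0 := (ENNReal.ofReal_pos.mpr hpos).ne'
    rwa [ENNReal.lt_div_iff_mul_lt (.inl hne) (.inl ofReal_ne_top), mul_comm,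
      ← ENNReal.lt_div_iff_mul_lt (.inl hT) (.inr hne)] at this
  have : (2 : ℝ) ^ k < 2 ^ (n : ℤ) := by
    rw [zpow_natCast]
    exact ((ENNReal.ofReal_lt_iff_lt_toReal hpos.le hC).mp hkC).trans hn
  exact ((zpow_lt_zpow_iff_right₀ (one_lt_two : (1 : ℝ) < 2)).mp this).le

lemma mul_setLIntegral_le_of_le_dyadicAvg {F W : ℝ → ℝ≥0∞} {T : ℝ≥0∞} {k m : ℤ}
    (hT : T ≤ dyadicAvg F k m) :
    T * ∫⁻ y in dyadicI k m, W y ≤ ∫⁻ y in dyadicI k m, F y * dyadicMaximal W y :=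
  calc T * ∫⁻ y in dyadicI k m, W y
      ≤ dyadicAvg F k m * ∫⁻ y in dyadicI k m, W y := by gcongr
    _ = (∫⁻ y in dyadicI k m, F y) * dyadicAvg W k m := by
        simp only [dyadicAvg, div_eq_mul_inv]; ring
    _ ≤ ∫⁻ y in dyadicI k m, F y * dyadicAvg W k m := lintegral_mul_const_le _ _
    _ ≤ ∫⁻ y in dyadicI k m, F y * dyadicMaximal W y :=
        setLIntegral_mono' measurableSet_Ico fun y hy => by
          gcongr; exact dyadicAvg_le_dyadicMaximal hy

def maximalDyadicIndices (F : ℝ → ℝ≥0∞) (T : ℝ≥0∞) : Set (ℤ × ℤ) :=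
  {p | T < dyadicAvg F p.1 p.2 ∧
    ∀ k m, p.1 < k → dyadicI p.1 p.2 ⊆ dyadicI k m → dyadicAvg F k m ≤ T}

lemma exists_mem_maximalDyadicIndices {F : ℝ → ℝ≥0∞} (hF : ∫⁻ y, F y ≠ ⊤) {T : ℝ≥0∞}
    (hT : T ≠ 0) {x : ℝ} (hx : T < dyadicMaximal F x) :
    ∃ p ∈ maximalDyadicIndices F T, x ∈ dyadicI p.1 p.2 := by
  obtain ⟨k₀, hk₀⟩ := exists_lt_dyadicAvg_of_lt_dyadicMaximal hx
  obtain ⟨b, hb⟩ := bddAbove_levels_lt_dyadicAvg hF hT x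
  obtain ⟨k, hk, hk_greatest⟩ := Int.exists_greatest_of_bdd ⟨b, fun _ hz => hb hz⟩ ⟨k₀, hk₀⟩
  refine ⟨(k, ⌊x / 2 ^ k⌋), ⟨hk, fun k' m' hlt hsub => ?_⟩, mem_dyadicI_iff.mpr rfl⟩
  obtain rfl : ⌊x / 2 ^ k'⌋ = m' := mem_dyadicI_iff.mp (hsub (mem_dyadicI_iff.mpr rfl))
  by_contra! h
  exact hlt.not_ge (hk_greatest k' h)

lemma pairwiseDisjoint_maximalDyadicIndices (F : ℝ → ℝ≥0∞) (T : ℝ≥0∞) :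
    (maximalDyadicIndices F T).PairwiseDisjoint fun p => dyadicI p.1 p.2 := by
  have key : ∀ p ∈ maximalDyadicIndices F T, ∀ q ∈ maximalDyadicIndices F T, p.1 ≤ q.1 →
      ∀ x ∈ dyadicI p.1 p.2, x ∈ dyadicI q.1 q.2 → p = q := by
    rintro p hp q hq hle x hxp hxq
    rcases hle.lt_or_eq with hlt | heq
    · exact absurd (hp.2 q.1 q.2 hlt (dyadicI_subset_of_mem hle hxp hxq)) hq.1.not_ge
    · exact Prod.ext heq ((mem_dyadicI_iff.mp hxp).symm.trans (heq ▸ mem_dyadicI_iff.mp hxq))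
  intro p hp q hq hne
  refine Set.disjoint_left.mpr fun x hxp hxq => hne ?_
  rcases le_total p.1 q.1 with hle | hle
  · exact key p hp q hq hle x hxp hxq
  · exact (key q hq p hp hle x hxq hxp).symm

theorem mul_setLIntegral_superlevel_dyadicMaximal_le (F W : ℝ → ℝ≥0∞) (hF : ∫⁻ y, F y ≠ ⊤)
    {T : ℝ≥0∞} (hT : T ≠ 0) :
    T * ∫⁻ x in {x | T < dyadicMaximal F x}, W x ≤ ∫⁻ x, F x * dyadicMaximal W x := by
  set S := maximalDyadicIndices F T
  have hcover : {x | T < dyadicMaximal F x} ⊆ ⋃ p ∈ S, dyadicI p.1 p.2 := fun x hx => by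
    obtain ⟨p, hp, hxp⟩ := exists_mem_maximalDyadicIndices hF hT hx
    exact mem_iUnion₂.mpr ⟨p, hp, hxp⟩
  have hsum (G : ℝ → ℝ≥0∞) :
      ∫⁻ x in ⋃ p ∈ S, dyadicI p.1 p.2, G x = ∑' p : S, ∫⁻ x in dyadicI p.1.1 p.1.2, G x :=
    lintegral_biUnion S.to_countable (fun _ _ => measurableSet_Ico)
      (pairwiseDisjoint_maximalDyadicIndices F T) G
  calc T * ∫⁻ x in {x | T < dyadicMaximal F x}, W x
      ≤ T * ∫⁻ x in ⋃ p ∈ S, dyadicI p.1 p.2, W x := by gcongr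
    _ = ∑' p : S, T * ∫⁻ x in dyadicI p.1.1 p.1.2, W x := by
        rw [hsum, ENNReal.tsum_mul_left]
    _ ≤ ∑' p : S, ∫⁻ x in dyadicI p.1.1 p.1.2, F x * dyadicMaximal W x :=
        ENNReal.tsum_le_tsum fun p => mul_setLIntegral_le_of_le_dyadicAvg p.2.1.le
    _ = ∫⁻ x in ⋃ p ∈ S, dyadicI p.1 p.2, F x * dyadicMaximal W x := (hsum _).symm
    _ ≤ ∫⁻ x, F x * dyadicMaximal W x := setLIntegral_le_lintegral _ _

theorem stmt0_general (w f : ℝ → ℝ)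
    (hf : Integrable f volume) (t : ℝ) (ht : 0 < t) :
    ENNReal.ofReal t *
        ∫⁻ x in {x | ENNReal.ofReal t < dyadicMaximal (fun y => (‖f y‖₊ : ℝ≥0∞)) x},
          ENNReal.ofReal (w x) ≤
      ∫⁻ x, (‖f x‖₊ : ℝ≥0∞) * dyadicMaximal (fun y => ENNReal.ofReal (w y)) x :=
  mul_setLIntegral_superlevel_dyadicMaximal_le _ _ hf.hasFiniteIntegral.ne
    (ENNReal.ofReal_pos.mpr ht).ne'

/-- Fefferman–Stein weak type inequality for the dyadic maximal function:
`t · w({Mf > t}) ≤ ∫ |f| · Mw`. -/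
theorem stmt0 (w f : ℝ → ℝ) (hw : ∀ x, 0 ≤ w x) (hwl : LocallyIntegrable w volume)
    (hf : Integrable f volume) (t : ℝ) (ht : 0 < t) :
    ENNReal.ofReal t *
        ∫⁻ x in {x | ENNReal.ofReal t < dyadicMaximal (fun y => (‖f y‖₊ : ℝ≥0∞)) x},
          ENNReal.ofReal (w x) ≤
      ∫⁻ x, (‖f x‖₊ : ℝ≥0∞) * dyadicMaximal (fun y => ENNReal.ofReal (w y)) x :=
  stmt0_general w f hf t ht
end

section
/- Let J = [a, a+α) be a dyadic interval, λ > 0, and μ = λ·1_{[a+α/3, a+α)} dx. If I is a dyadic subinterval of J such that jp(J) = a+α/3 lies in the left half I⁻ of I, then ⟨μ, h_I⟩ / √|I| = λ/3, where h_I = (1_{I⁺} − 1_{I⁻})/|I|^{1/2} and ⟨μ, h_I⟩ = ∫ h_I dμ. -/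
open MeasureTheory Set

/-- The "jumping point" of the dyadic interval `J = [2^n p, 2^n (p+1))`. -/
noncomputable def jp (n p : ℤ) : ℝ := (2:ℝ)^n * p + (2:ℝ)^n / 3

/-- The right endpoint of the dyadic interval `J = [2^n p, 2^n (p+1))`. -/
noncomputable def rep (n p : ℤ) : ℝ := (2:ℝ)^n * (p + 1)

/-- The `L²`-normalized Haar function of the dyadic interval `dyadicI k m`:
`h_I = (1_{I⁺} - 1_{I⁻}) / |I|^{1/2}`, where `I⁻ = dyadicI (k-1) (2m)` and
`I⁺ = dyadicI (k-1) (2m+1)`. -/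
noncomputable def haarF (k m : ℤ) (x : ℝ) : ℝ :=
  ((dyadicI (k-1) (2*m+1)).indicator (fun _ => (1:ℝ)) x
    - (dyadicI (k-1) (2*m)).indicator (fun _ => (1:ℝ)) x) / Real.sqrt ((2:ℝ)^k)

/-!
Since `I ⊆ J`, the measure covers all of `I⁺` and the part of `I⁻` to the right of `jp(J)`, so the
integral equals `λ |I|^{-1/2} (jp(J) - left(I))`. Writing `|J| = 2^s |I|`, the quantity
`3 (jp(J) - left(I)) / |I| = 3 (2^s p - m) + 2^s` is an integer, not divisible by `3`, and lies in
`[0, 3/2)` because `jp(J) ∈ I⁻`; hence it equals `1`, i.e. `jp(J)` sits exactly at the first third of `I`.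
-/

lemma setIntegral_Ico_indicator_sub_indicator {l x c r e : ℝ}
    (hlx : l ≤ x) (hxc : x ≤ c) (hcr : c ≤ r) (hre : r ≤ e) :
    ∫ y in Ico x e, ((Ico c r).indicator (fun _ => (1:ℝ)) y
      - (Ico l c).indicator (fun _ => (1:ℝ)) y) = (r - c) - (c - x) := by
  have hint (a b : ℝ) : IntegrableOn ((Ico a b).indicator (fun _ => (1:ℝ))) (Ico x e) :=
    ((integrable_indicator_iff measurableSet_Ico).mpr
      (integrableOn_const measure_Ico_lt_top.ne)).integrableOn
  rw [integral_sub (hint c r) (hint l c), setIntegral_indicator measurableSet_Ico,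
    setIntegral_indicator measurableSet_Ico, Ico_inter_Ico, Ico_inter_Ico,
    max_eq_right hxc, min_eq_right hre, max_eq_left hlx, min_eq_right (hcr.trans hre),
    setIntegral_const, setIntegral_const, Real.volume_real_Ico_of_le hcr,
    Real.volume_real_Ico_of_le hxc, smul_eq_mul, smul_eq_mul, mul_one, mul_one]

section Dyadic

variable {k m n p : ℤ}

lemma dyadicI_left_half (k m : ℤ) :
    dyadicI (k - 1) (2 * m) = Ico ((2:ℝ)^k * m) ((2:ℝ)^k * m + (2:ℝ)^k / 2) := by
  rw [dyadicI, zpow_sub_one₀ two_ne_zero]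
  push_cast
  congr 1 <;> ring

lemma dyadicI_right_half (k m : ℤ) :
    dyadicI (k - 1) (2 * m + 1) = Ico ((2:ℝ)^k * m + (2:ℝ)^k / 2) ((2:ℝ)^k * m + (2:ℝ)^k) := by
  rw [dyadicI, zpow_sub_one₀ two_ne_zero]
  push_cast
  congr 1 <;> ring

lemma le_of_dyadicI_subset (h : dyadicI k m ⊆ dyadicI n p) : k ≤ n := by
  have h2k : (0:ℝ) < 2^k := zpow_pos two_pos k
  obtain ⟨hl, hr⟩ := (Ico_subset_Ico_iff (by nlinarith)).mp h
  rw [← zpow_le_zpow_iff_right₀ (one_lt_two : (1:ℝ) < 2)]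
  nlinarith

lemma three_mul_add_two_pow_eq_one {a : ℤ} {s : ℕ} (h0 : 0 ≤ 3 * a + 2^s)
    (h1 : 3 * a + 2^s < 2) : 3 * a + 2^s = 1 := by
  have : 3 * a + 2^s ≠ 0 := fun h ↦ by
    have h3 : (3:ℤ) ∣ 2^s := ⟨-a, by linarith⟩
    exact absurd (Int.Prime.dvd_pow' (by norm_num) h3) (by norm_num)
  omega

lemma jp_eq_of_mem_dyadicI_left_half (hkn : k ≤ n) (hj : jp n p ∈ dyadicI (k - 1) (2 * m)) :
    jp n p = (2:ℝ)^k * m + (2:ℝ)^k / 3 := by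
  obtain ⟨s, rfl⟩ : ∃ s : ℕ, n = k + s := ⟨(n - k).toNat, by omega⟩
  have h2k : (0:ℝ) < 2^k := zpow_pos two_pos k
  -- `jp - 2^k m = 2^k z / 3` with the integer `z = 3 (2^s p - m) + 2^s`
  have hjp : jp (k + s) p - 2^k * m = 2^k * ((3 * ((2:ℤ)^s * p - m) + 2^s : ℤ) : ℝ) / 3 := by
    rw [jp, zpow_add₀ two_ne_zero, zpow_natCast]
    push_cast
    ring
  rw [dyadicI_left_half, mem_Ico] at hj
  have hz := three_mul_add_two_pow_eq_one (a := (2:ℤ)^s * p - m) (s := s)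
    (by exact_mod_cast (by nlinarith : (0:ℝ) ≤ ((3 * ((2:ℤ)^s * p - m) + 2^s : ℤ) : ℝ)))
    (by exact_mod_cast (by nlinarith : ((3 * ((2:ℤ)^s * p - m) + 2^s : ℤ) : ℝ) < 2))
  rw [hz] at hjp
  push_cast at hjp
  linarith

end Dyadic

theorem stmt2_general (n p k m : ℤ) (lam : ℝ)
    (hsub : dyadicI k m ⊆ dyadicI n p)
    (hj : jp n p ∈ dyadicI (k - 1) (2 * m)) :
    (∫ x in Set.Ico (jp n p) (rep n p), lam * haarF k m x) / Real.sqrt ((2:ℝ)^k)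
      = lam / 3 := by
  have h2k : (0:ℝ) < 2^k := zpow_pos two_pos k
  have hjp := jp_eq_of_mem_dyadicI_left_half (le_of_dyadicI_subset hsub) hj
  have hrep : (2:ℝ)^k * m + 2^k ≤ rep n p := by
    have := ((Ico_subset_Ico_iff (by nlinarith)).mp hsub).2
    rw [rep]; linarith
  have hint := setIntegral_Ico_indicator_sub_indicator (l := 2^k * m) (x := jp n p)
    (c := 2^k * m + 2^k / 2) (r := 2^k * m + 2^k) (by rw [hjp]; linarith) (by rw [hjp]; linarith)
    (by linarith) hrep
  simp_rw [haarF, dyadicI_left_half, dyadicI_right_half, mul_div_assoc']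
  rw [integral_div, integral_const_mul, hint, hjp, div_div, Real.mul_self_sqrt h2k.le]
  field_simp
  ring

/-- For the measure `μ = λ·1_{[jp(J), rep(J))} dx` and any dyadic `I ⊆ J` whose left
half contains `jp(J)`, one has `⟨μ, h_I⟩ / √|I| = λ/3`, where
`⟨μ, h_I⟩ = ∫ h_I dμ = ∫_{[jp(J),rep(J))} λ · h_I`. -/
theorem stmt2 (n p k m : ℤ) (lam : ℝ) (hlam : 0 < lam)
    (hsub : dyadicI k m ⊆ dyadicI n p)
    (hj : jp n p ∈ dyadicI (k - 1) (2 * m)) :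
    (∫ x in Set.Ico (jp n p) (rep n p), lam * haarF k m x) / Real.sqrt ((2:ℝ)^k)
      = lam / 3 :=
  stmt2_general n p k m lam hsub hj
end
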